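/- LT_Z(R) decomposes as a direct sum of real vector spaces LT_Z(R) = P_−(R) ⊕ SH(R), where P_−(R) consists of lower-triangular matrices P = Σ_{j ≤ 0} d_j Λ^j with d_0 real-diagonal, and SH(R) consists of the skew-hermitian matrices; the projections are π_−(P) = a_0 + Σ_{j<0} d_j Λ^j + Σ_{j<0} Λ^j d_{−j}* and π_{sh}(P) = P − π_−(P), where d_j = a_j + i b_j splits each diagonal into real and imaginary parts. Moreover P_−(R) is a Lie subalgebra. -/

import Mathlib

/- The coefficient algebra is `R = ℂ ⊗_ℝ R(ℝ)`, realized as the algebra `T → ℂ`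
of complex-valued functions, with complex conjugation acting pointwise; the
real subalgebra `R(ℝ)` is the set of real-valued functions. -/

noncomputable def matMul {T : Type*} (A B : ℤ → ℤ → T → ℂ) : ℤ → ℤ → T → ℂ :=
  fun i j => ∑ᶠ k, A i k * B k j

def LTZ {T : Type*} (A : ℤ → ℤ → T → ℂ) : Prop :=
  ∃ N : ℤ, ∀ i j : ℤ, N < j - i → A i j = 0

/-- Skew-hermitian: `A* = -A`, where `*` is conjugate transpose (conjugation
pointwise on the function coefficients). -/
def SkewHermitianF {T : Type*} (A : ℤ → ℤ → T → ℂ) : Prop :=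
  ∀ i j : ℤ, star (A j i) = -A i j

/-- Member of `P_-(ℝ)`: lower triangular with real-valued main diagonal. -/
def LowerReal {T : Type*} (P : ℤ → ℤ → T → ℂ) : Prop :=
  (∀ i j : ℤ, i < j → P i j = 0) ∧ (∀ (i : ℤ) (t : T), (P i i t).im = 0)

/-- The projection `π_-` onto `P_-(ℝ)`:
`π_-(P) = a_0 + Σ_{j<0} d_j Λ^j + Σ_{j<0} Λ^j d_{-j}*`, written entrywise. -/
noncomputable def piMinus {T : Type*} (P : ℤ → ℤ → T → ℂ) : ℤ → ℤ → T → ℂ :=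
  fun i j => if i < j then 0
    else if i = j then (fun t => ((P i i t).re : ℂ))
    else P i j + star (P j i)

/-! `piMinus P` keeps the real part of the diagonal of `P` and replaces each entry below the
diagonal by `P i j + star (P j i)`, which is exactly what makes `P - piMinus P` skew-hermitian.
Uniqueness: a skew-hermitian `S` has purely imaginary diagonal and `S i j + star (S j i) = 0`,
so `piMinus (Q + S) = Q` for `Q` lower triangular with real diagonal. The diagonal of a product
of lower triangular matrices is the product of the diagonals, so such `Q` form a subalgebra,
hence a Lie subalgebra. -/

section
variable {T : Type*}

theorem LTZ.sub {A B : ℤ → ℤ → T → ℂ} (hA : LTZ A) (hB : LTZ B) : LTZ (A - B) := by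
  obtain ⟨M, hM⟩ := hA
  obtain ⟨N, hN⟩ := hB
  exact ⟨max M N, fun i j h => by simp [hM i j (by omega), hN i j (by omega)]⟩

namespace LowerReal

variable {A B : ℤ → ℤ → T → ℂ}

theorem ltz (hA : LowerReal A) : LTZ A :=
  ⟨0, fun i j h => hA.1 i j (by omega)⟩

theorem sub (hA : LowerReal A) (hB : LowerReal B) : LowerReal (A - B) :=
  ⟨fun i j h => by simp [hA.1 i j h, hB.1 i j h],
    fun i t => by simp [hA.2 i t, hB.2 i t]⟩

end LowerReal

theorem matMul_apply_of_lt {A B : ℤ → ℤ → T → ℂ} (hA : ∀ i j, i < j → A i j = 0)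
    (hB : ∀ i j, i < j → B i j = 0) {i j : ℤ} (h : i < j) : matMul A B i j = 0 :=
  finsum_eq_zero_of_forall_eq_zero fun k => by
    rcases le_or_gt k i with hk | hk
    · rw [hB k j (by omega), mul_zero]
    · rw [hA i k hk, zero_mul]

theorem matMul_apply_self {A B : ℤ → ℤ → T → ℂ} (hA : ∀ i j, i < j → A i j = 0)
    (hB : ∀ i j, i < j → B i j = 0) (i : ℤ) : matMul A B i i = A i i * B i i :=
  finsum_eq_single _ i fun k hk => by
    rcases hk.lt_or_gt with h | h
    · rw [hB k i h, mul_zero]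
    · rw [hA i k h, zero_mul]

theorem LowerReal.matMul {A B : ℤ → ℤ → T → ℂ} (hA : LowerReal A) (hB : LowerReal B) :
    LowerReal (matMul A B) :=
  ⟨fun _ _ h => matMul_apply_of_lt hA.1 hB.1 h, fun i t => by
    rw [matMul_apply_self hA.1 hB.1, Pi.mul_apply, Complex.mul_im, hA.2 i t, hB.2 i t]
    ring⟩

theorem SkewHermitianF.re_apply_self {S : ℤ → ℤ → T → ℂ} (hS : SkewHermitianF S)
    (i : ℤ) (t : T) : (S i i t).re = 0 := by
  have := congrArg Complex.re (congrFun (hS i i) t)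
  simp only [Pi.star_apply, Complex.star_def, Complex.conj_re, Pi.neg_apply,
    Complex.neg_re] at this
  linarith

theorem piMinus_lowerReal (P : ℤ → ℤ → T → ℂ) : LowerReal (piMinus P) :=
  ⟨fun i j h => by simp [piMinus, h], fun i t => by simp [piMinus]⟩

theorem skewHermitianF_sub_piMinus (P : ℤ → ℤ → T → ℂ) : SkewHermitianF (P - piMinus P) := by
  intro i j
  funext t
  rcases lt_trichotomy i j with h | rfl | h
  · simp [piMinus, h, h.not_gt, h.ne']
  · apply Complex.ext <;> simp [piMinus]
  · simp [piMinus, h, h.not_gt, h.ne']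

theorem piMinus_add_eq {Q S : ℤ → ℤ → T → ℂ} (hQ : LowerReal Q) (hS : SkewHermitianF S) :
    piMinus (Q + S) = Q := by
  funext i j t
  rcases lt_trichotomy i j with h | rfl | h
  · simp [piMinus, h, hQ.1 i j h]
  · apply Complex.ext
    · simp [piMinus, hS.re_apply_self]
    · simp [piMinus, hQ.2 i t]
  · have hSji : star (S j i t) = -S i j t := congrFun (hS i j) t
    simp [piMinus, h.not_gt, h.ne', hQ.1 j i h, hSji]

end

/-- `LT_ℤ(R) = P_-(ℝ) ⊕ SH(R)` as real vector spaces, with the stated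
projections, and `P_-(ℝ)` is a Lie subalgebra. -/
theorem statement6 {T : Type*} :
    (∀ P : ℤ → ℤ → T → ℂ, LTZ P →
      (LowerReal (piMinus P) ∧ LTZ (piMinus P)) ∧
      (SkewHermitianF (P - piMinus P) ∧ LTZ (P - piMinus P)) ∧
      P = piMinus P + (P - piMinus P) ∧
      (∀ Q S : ℤ → ℤ → T → ℂ, LowerReal Q → LTZ Q → SkewHermitianF S → LTZ S →
        P = Q + S → Q = piMinus P ∧ S = P - piMinus P)) ∧
    (∀ A B : ℤ → ℤ → T → ℂ, LowerReal A → LowerReal B →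
        LowerReal (matMul A B - matMul B A)) := by
  refine ⟨fun P hP => ⟨⟨piMinus_lowerReal P, (piMinus_lowerReal P).ltz⟩,
    ⟨skewHermitianF_sub_piMinus P, hP.sub (piMinus_lowerReal P).ltz⟩,
    (add_sub_cancel _ _).symm, ?_⟩, fun A B hA hB => (hA.matMul hB).sub (hB.matMul hA)⟩
  rintro Q S hQ - hS - rfl
  have hπ := piMinus_add_eq hQ hS
  exact ⟨hπ.symm, by rw [hπ, add_sub_cancel_left]⟩
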